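/- With m̃ₙ as above (regularized signed maximum with cut-off χ satisfying the stated properties), for all n ≥ 0 and all real numbers z, z₁, …, zₙ, one has |m̃_{n+1}(z, z₁, …, zₙ) − m̃ₙ(z₁, …, zₙ)| ≤ 2|z| + 1. -/

import Mathlib

/-- The regularized signed maximum of coordinates (with `m̃₀ := 0`):
`m̃ₙ(z) = ½(max z + min z) + ½(max z − min z)·χ((max z + min z)/(1 + max z − min z))`. -/
noncomputable def mtilde (χ : ℝ → ℝ) : (n : ℕ) → (Fin n → ℝ) → ℝ
  | 0, _ => 0
  | _ + 1, z =>
    let M := Finset.univ.sup' Finset.univ_nonempty z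
    let L := Finset.univ.inf' Finset.univ_nonempty z
    (M + L) / 2 + (M - L) / 2 * χ ((M + L) / (1 + (M - L)))

noncomputable def Fm (χ : ℝ → ℝ) (M L : ℝ) : ℝ :=
  (M + L) / 2 + (M - L) / 2 * χ ((M + L) / (1 + (M - L)))

lemma Fm_le_max (χ : ℝ → ℝ) (hχbdd : ∀ s : ℝ, |χ s| ≤ 1) {M L : ℝ} (h : L ≤ M) :
    Fm χ M L ≤ M := by
  have h1 := (abs_le.mp (hχbdd ((M + L) / (1 + (M - L))))).2
  have h2 : (M - L) / 2 * χ ((M + L) / (1 + (M - L))) ≤ (M - L) / 2 * 1 :=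
    mul_le_mul_of_nonneg_left h1 (by linarith)
  unfold Fm; nlinarith

lemma min_le_Fm (χ : ℝ → ℝ) (hχbdd : ∀ s : ℝ, |χ s| ≤ 1) {M L : ℝ} (h : L ≤ M) :
    L ≤ Fm χ M L := by
  have h1 := (abs_le.mp (hχbdd ((M + L) / (1 + (M - L))))).1
  have h2 : (M - L) / 2 * (-1) ≤ (M - L) / 2 * χ ((M + L) / (1 + (M - L))) :=
    mul_le_mul_of_nonneg_left h1 (by linarith)
  unfold Fm; nlinarith

lemma Fm_lower (χ : ℝ → ℝ) (hχpos : ∀ s : ℝ, 1 ≤ s → χ s = 1)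
    (hχge : ∀ s : ℝ, 0 ≤ s → s ≤ 1 → s ≤ χ s)
    {M L : ℝ} (hLM : L ≤ M) (h0 : 0 ≤ M + L) (hL : L ≤ 1/2) :
    M + L - 1/2 ≤ Fm χ M L := by
  have hd : (0:ℝ) < 1 + (M - L) := by linarith
  set s := (M + L) / (1 + (M - L)) with hs
  rcases le_or_gt 1 s with h1 | h1
  · rw [Fm, ← hs, hχpos s h1]; nlinarith
  · have hs0 : 0 ≤ s := div_nonneg h0 hd.le
    have hχ := hχge s hs0 h1.le
    have hB : (0:ℝ) ≤ (M - L) / 2 := by linarith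
    have key : (M + L) / 2 + (M - L) / 2 * s - (M + L - 1/2) = (1/2 - L) / (1 + (M - L)) := by
      rw [hs]; field_simp; ring
    have hpos : 0 ≤ (1/2 - L) / (1 + (M - L)) := div_nonneg (by linarith) hd.le
    have := mul_le_mul_of_nonneg_left hχ hB
    rw [Fm, ← hs]; linarith

lemma Fm_eq_max (χ : ℝ → ℝ) (hχpos : ∀ s : ℝ, 1 ≤ s → χ s = 1)
    {M L : ℝ} (hLM : L ≤ M) (hL : 1/2 ≤ L) : Fm χ M L = M := by
  have hd : (0:ℝ) < 1 + (M - L) := by linarith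
  have h1 : 1 ≤ (M + L) / (1 + (M - L)) := by rw [le_div_iff₀ hd]; linarith
  rw [Fm, hχpos _ h1]; ring

lemma Fm_upper (χ : ℝ → ℝ) (hχneg : ∀ s : ℝ, s ≤ -1 → χ s = -1)
    (hχle : ∀ s : ℝ, -1 ≤ s → s ≤ 0 → χ s ≤ s)
    {M L : ℝ} (hLM : L ≤ M) (h0 : M + L ≤ 0) (hM : -(1/2) ≤ M) :
    Fm χ M L ≤ L + M + 1/2 := by
  have hd : (0:ℝ) < 1 + (M - L) := by linarith
  set s := (M + L) / (1 + (M - L)) with hs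
  rcases le_or_gt s (-1) with h1 | h1
  · rw [Fm, ← hs, hχneg s h1]; nlinarith
  · have hs0 : s ≤ 0 := div_nonpos_of_nonpos_of_nonneg h0 hd.le
    have hχ := hχle s h1.le hs0
    have hB : (0:ℝ) ≤ (M - L) / 2 := by linarith
    have key : (L + M + 1/2) - ((M + L) / 2 + (M - L) / 2 * s) = (1/2 + M) / (1 + (M - L)) := by
      rw [hs]; field_simp; ring
    have hpos : 0 ≤ (1/2 + M) / (1 + (M - L)) := div_nonneg (by linarith) hd.le
    have := mul_le_mul_of_nonneg_left hχ hB
    rw [Fm, ← hs]; linarith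

lemma Fm_eq_min (χ : ℝ → ℝ) (hχneg : ∀ s : ℝ, s ≤ -1 → χ s = -1)
    {M L : ℝ} (hLM : L ≤ M) (hM : M ≤ -(1/2)) : Fm χ M L = L := by
  have hd : (0:ℝ) < 1 + (M - L) := by linarith
  have h1 : (M + L) / (1 + (M - L)) ≤ -1 := by rw [div_le_iff₀ hd]; linarith
  rw [Fm, hχneg _ h1]; ring

lemma Fm_diff_bound (χ : ℝ → ℝ)
    (hχbdd : ∀ s : ℝ, |χ s| ≤ 1)
    (hχneg : ∀ s : ℝ, s ≤ -1 → χ s = -1)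
    (hχpos : ∀ s : ℝ, 1 ≤ s → χ s = 1)
    (hχle : ∀ s : ℝ, -1 ≤ s → s ≤ 0 → χ s ≤ s)
    (hχge : ∀ s : ℝ, 0 ≤ s → s ≤ 1 → s ≤ χ s)
    {L M' M : ℝ} (h1 : L ≤ M') (h2 : M' ≤ M) :
    |Fm χ M L - Fm χ M' L| ≤ 2 * |M| + 1 := by
  have hLM : L ≤ M := h1.trans h2
  have habs1 : M ≤ |M| := le_abs_self M
  have habs2 : -|M| ≤ M := neg_abs_le M
  have hFM_le := Fm_le_max χ hχbdd hLM
  have hFM'_le := Fm_le_max χ hχbdd h1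
  have hFM_ge := min_le_Fm χ hχbdd hLM
  have hFM'_ge := min_le_Fm χ hχbdd h1
  rw [abs_le]
  rcases le_or_gt 0 (M' + L) with hA2 | hA2
  · -- both midpoints nonneg
    have hA1 : 0 ≤ M + L := by linarith
    have hM0 : 0 ≤ M := by linarith
    rcases le_or_gt L (1/2) with hL | hL
    · have p1 := Fm_lower χ hχpos hχge hLM hA1 hL
      have p2 := Fm_lower χ hχpos hχge h1 hA2 hL
      constructor <;> linarith
    · rw [Fm_eq_max χ hχpos hLM hL.le, Fm_eq_max χ hχpos h1 hL.le]
      constructor <;> linarith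
  · rcases le_or_gt (M + L) 0 with hA1 | hA1
    · -- both midpoints nonpos
      rcases le_or_gt (-(1/2)) M with hM | hM
      · have p1 := Fm_upper χ hχneg hχle hLM hA1 hM
        rcases le_or_gt (-(1/2)) M' with hM' | hM'
        · have p2 := Fm_upper χ hχneg hχle h1 hA2.le hM'
          constructor <;> rcases le_or_gt 0 M with h | h <;> linarith
        · rw [Fm_eq_min χ hχneg h1 hM'.le]
          constructor <;> linarith
      · rw [Fm_eq_min χ hχneg hLM hM.le, Fm_eq_min χ hχneg h1 (by linarith)]
        constructor <;> linarith [abs_nonneg M]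
    · -- mixed: M' + L ≤ 0 ≤ M + L
      have hM0 : 0 ≤ M := by linarith
      rcases le_or_gt L (1/2) with hL | hL
      · have p1 := Fm_lower χ hχpos hχge hLM hA1.le hL
        constructor <;> linarith
      · linarith

lemma Fm_reflect (χ : ℝ → ℝ) (hχodd : ∀ s : ℝ, χ (-s) = -χ s) (M L : ℝ) :
    Fm χ M L = -Fm χ (-L) (-M) := by
  unfold Fm
  rw [show (-L + -M) / (1 + (-L - -M)) = -((M + L) / (1 + (M - L))) by ring_nf, hχodd]
  ring

lemma sup'_univ_cons {n : ℕ} (z : ℝ) (zs : Fin (n + 1) → ℝ) :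
    Finset.univ.sup' Finset.univ_nonempty (Fin.cons z zs : Fin (n + 2) → ℝ)
      = max z (Finset.univ.sup' Finset.univ_nonempty zs) := by
  apply le_antisymm
  · apply Finset.sup'_le
    intro i _
    cases i using Fin.cases with
    | zero => simp [le_max_left]
    | succ j =>
      simp only [Fin.cons_succ]
      exact le_trans (Finset.le_sup' zs (Finset.mem_univ j)) (le_max_right _ _)
  · apply max_le
    · have h := Finset.le_sup' (Fin.cons z zs : Fin (n + 2) → ℝ)
        (Finset.mem_univ (0 : Fin (n + 2)))
      simp only [Fin.cons_zero] at h; exact h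
    · apply Finset.sup'_le
      intro j _
      have h := Finset.le_sup' (Fin.cons z zs : Fin (n + 2) → ℝ)
        (Finset.mem_univ j.succ)
      simp only [Fin.cons_succ] at h; exact h

lemma inf'_univ_cons {n : ℕ} (z : ℝ) (zs : Fin (n + 1) → ℝ) :
    Finset.univ.inf' Finset.univ_nonempty (Fin.cons z zs : Fin (n + 2) → ℝ)
      = min z (Finset.univ.inf' Finset.univ_nonempty zs) := by
  apply le_antisymm
  · apply le_min
    · have h := Finset.inf'_le (Fin.cons z zs : Fin (n + 2) → ℝ)
        (Finset.mem_univ (0 : Fin (n + 2)))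
      simp only [Fin.cons_zero] at h; exact h
    · apply Finset.le_inf'
      intro j _
      have h := Finset.inf'_le (Fin.cons z zs : Fin (n + 2) → ℝ)
        (Finset.mem_univ j.succ)
      simp only [Fin.cons_succ] at h; exact h
  · apply Finset.le_inf'
    intro i _
    cases i using Fin.cases with
    | zero => simp [min_le_left]
    | succ j =>
      simp only [Fin.cons_succ]
      exact le_trans (min_le_right _ _) (Finset.inf'_le zs (Finset.mem_univ j))

/-- Key estimate for commutators with field operators: adding one coordinate `z`
changes the regularized signed maximum by at most `2|z| + 1`. -/
theorem mtilde_cons_diff_bound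
    (δ : ℝ) (hδ : 0 < δ) (χ : ℝ → ℝ)
    (hχsmooth : ContDiff ℝ (⊤ : ℕ∞) χ)
    (hχodd : ∀ s : ℝ, χ (-s) = -χ s)
    (hχbdd : ∀ s : ℝ, |χ s| ≤ 1)
    (hχneg : ∀ s : ℝ, s ≤ -1 → χ s = -1)
    (hχpos : ∀ s : ℝ, 1 ≤ s → χ s = 1)
    (hχderiv : ∀ s : ℝ, 0 ≤ deriv χ s ∧ deriv χ s ≤ 1 + δ)
    (hχle : ∀ s : ℝ, -1 ≤ s → s ≤ 0 → χ s ≤ s)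
    (hχge : ∀ s : ℝ, 0 ≤ s → s ≤ 1 → s ≤ χ s)
    (n : ℕ) (z : ℝ) (zs : Fin n → ℝ) :
    |mtilde χ (n + 1) (Fin.cons z zs) - mtilde χ n zs| ≤ 2 * |z| + 1 := by
  match n, zs with
  | 0, zs =>
    have hc : (Fin.cons z zs : Fin 1 → ℝ) = fun _ => z := by
      funext i; fin_cases i; simp
    have h1 : mtilde χ 1 (Fin.cons z zs) = z := by
      show Fm χ _ _ = z
      rw [hc, Finset.sup'_const, Finset.inf'_const]
      unfold Fm; ring_nf
    have h0 : mtilde χ 0 zs = 0 := rfl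
    rw [h1, h0, sub_zero]
    have h2 := le_abs_self z
    have h3 := abs_nonneg z
    rw [abs_le]
    constructor <;> [linarith [neg_abs_le z]; linarith]
  | (m + 1), zs =>
    set M' := Finset.univ.sup' Finset.univ_nonempty zs with hM'
    set L' := Finset.univ.inf' Finset.univ_nonempty zs with hL'
    have hLM' : L' ≤ M' :=
      le_trans (Finset.inf'_le zs (Finset.mem_univ 0)) (Finset.le_sup' zs (Finset.mem_univ 0))
    have hm1 : mtilde χ (m + 1 + 1) (Fin.cons z zs) = Fm χ (max z M') (min z L') := by
      show Fm χ _ _ = _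
      rw [sup'_univ_cons, inf'_univ_cons]
    have hm2 : mtilde χ (m + 1) zs = Fm χ M' L' := rfl
    rw [hm1, hm2]
    rcases le_or_gt z M' with hzM | hzM
    · rcases le_or_gt L' z with hLz | hLz
      · rw [max_eq_right hzM, min_eq_right hLz, sub_self, abs_zero]
        positivity
      · -- z < L'
        rw [max_eq_right hzM, min_eq_left hLz.le]
        rw [Fm_reflect χ hχodd M' z, Fm_reflect χ hχodd M' L']
        rw [show -Fm χ (-z) (-M') - -Fm χ (-L') (-M') = -(Fm χ (-z) (-M') - Fm χ (-L') (-M')) by ring,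
          abs_neg]
        have := Fm_diff_bound χ hχbdd hχneg hχpos hχle hχge
          (neg_le_neg hLM') (neg_le_neg hLz.le)
        rwa [abs_neg] at this
    · -- M' < z
      rw [max_eq_left hzM.le, min_eq_right (hLM'.trans hzM.le)]
      exact Fm_diff_bound χ hχbdd hχneg hχpos hχle hχge hLM' hzM.le
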